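/- arXiv:2101.04208 — 5 statements merged into one kernel-verified Lean document; each statement's English description precedes it below -/
import Mathlib

section
/- Let n ∈ ℕ, p ∈ [1/2,1), q = 1−p, and let X be a random variable with P(X = √(q/p)) = p and P(X = −√(p/q)) = q. For all ε > 0 and γ > 0 the quantity n^{−1/2}·sup_{0<z<ε√n} ( γ·|E[X³·1_{|X|<z}]| + z·E[X²·1_{|X|≥z}] ) equals: ε, if n·ε² ≤ q/p; max{ √(q/(np)), γ·√(q³/(np)) + ε·p }, if q/p < n·ε² ≤ p/q; and max{ q, (γ·q² + p²)·1_{p>1/2}, γ·(p−q) } / √(n·p·q), if n·ε² > p/q. -/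
open MeasureTheory Real Set

/-- Truncated third moment `E[X³·1_{|X|<z}]`. -/
noncomputable def mu3 {Ω : Type*} [MeasurableSpace Ω] (μ : Measure Ω) (X : Ω → ℝ) (z : ℝ) : ℝ :=
  ∫ ω, (if |X ω| < z then (X ω) ^ 3 else 0) ∂μ

/-- Truncated second moment `E[X²·1_{|X|≥z}]`. -/
noncomputable def sig2 {Ω : Type*} [MeasurableSpace Ω] (μ : Measure Ω) (X : Ω → ℝ) (z : ℝ) : ℝ :=
  ∫ ω, (if z ≤ |X ω| then (X ω) ^ 2 else 0) ∂μ

/-!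
With atoms `a = √(q/p) ≤ b = √(p/q)`, the truncated moments are step functions of `z`, and the
identities `p a² = q`, `q b² = p` make `z ↦ γ |μ(z)| + z σ²(z)` equal to `z` on `(0, a]`, to
`p z + γ q a` on `(a, b]` and to the constant `γ (p b - q a)` beyond `b`. This function increases
on each piece, so its supremum over `(0, ε√n)` is the largest of the values it approaches at the
right ends of the pieces that meet `(0, ε√n)`; the three cases are the positions of `ε√n`
relative to `a` and `b`. Multiplying by `√(pq)` turns `a` and `b` into `q` and `p`.
-/

section TwoPoint

variable {Ω : Type*} [MeasurableSpace Ω] {μ : Measure Ω} [IsProbabilityMeasure μ] {X : Ω → ℝ}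
  {a b p q : ℝ}

theorem integral_comp_of_two_point (hX : Measurable X) (hab : a ≠ b) (hp : 0 ≤ p) (hq : 0 ≤ q)
    (hpq : p + q = 1) (ha : μ {ω | X ω = a} = ENNReal.ofReal p)
    (hb : μ {ω | X ω = b} = ENNReal.ofReal q) (g : ℝ → ℝ) :
    ∫ ω, g (X ω) ∂μ = p * g a + q * g b := by
  set S := {ω | X ω = a}
  have hS : MeasurableSet S := hX (measurableSet_singleton a)
  have hcompl : μ Sᶜ = μ {ω | X ω = b} := by
    rw [measure_compl hS (measure_ne_top _ _), ha, hb, measure_univ, ← ENNReal.ofReal_one,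
      ← ENNReal.ofReal_sub _ hp, ← hpq, add_sub_cancel_left]
  have hb_ae : {ω | X ω = b} =ᵐ[μ] Sᶜ :=
    ae_eq_of_subset_of_measure_ge (fun ω hω hωa => hab (hωa.symm.trans hω)) hcompl.le
      (hX (measurableSet_singleton b)).nullMeasurableSet (measure_ne_top _ _)
  have hg : (fun ω => g (X ω)) =ᵐ[μ] S.indicator (fun _ => g a) + Sᶜ.indicator (fun _ => g b) := by
    filter_upwards [hb_ae.mem_iff] with ω hω
    by_cases hωa : ω ∈ S
    · simp [hωa, show X ω = a from hωa]
    · simp [hωa, show X ω = b from hω.2 hωa]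
  rw [integral_congr_ae hg, integral_add' ((integrable_const _).indicator hS)
      ((integrable_const _).indicator hS.compl), integral_indicator_const _ hS,
    integral_indicator_const _ hS.compl, measureReal_def, measureReal_def, ha, hcompl, hb,
    ENNReal.toReal_ofReal hp, ENNReal.toReal_ofReal hq, smul_eq_mul, smul_eq_mul]

variable (hX : Measurable X) (ha : 0 < a) (hb : 0 < b) (hp : 0 ≤ p) (hq : 0 ≤ q) (hpq : p + q = 1)
  (hXa : μ {ω | X ω = a} = ENNReal.ofReal p) (hXb : μ {ω | X ω = -b} = ENNReal.ofReal q)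
include hX ha hb hp hq hpq hXa hXb

theorem mu3_of_two_point (z : ℝ) :
    mu3 μ X z = (if a < z then p * a ^ 3 else 0) - (if b < z then q * b ^ 3 else 0) := by
  rw [mu3, integral_comp_of_two_point (g := fun x => if |x| < z then x ^ 3 else 0) hX
    (by linarith) hp hq hpq hXa hXb]
  simp only [abs_of_pos ha, abs_neg, abs_of_pos hb, mul_ite, mul_zero]
  split_ifs <;> ring

theorem sig2_of_two_point (z : ℝ) :
    sig2 μ X z = (if z ≤ a then p * a ^ 2 else 0) + (if z ≤ b then q * b ^ 2 else 0) := by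
  rw [sig2, integral_comp_of_two_point (g := fun x => if z ≤ |x| then x ^ 2 else 0) hX
    (by linarith) hp hq hpq hXa hXb]
  simp only [abs_of_pos ha, abs_neg, abs_of_pos hb, mul_ite, mul_zero, neg_sq]

end TwoPoint

theorem le_csSup_image_of_eqOn_affine {f : ℝ → ℝ} {S : Set ℝ} {l u s c : ℝ}
    (hbdd : BddAbove (f '' S)) (hlu : l < u) (hs : 0 < s) (hsub : Ioo l u ⊆ S)
    (hf : EqOn f (s * · + c) (Ioo l u)) : s * u + c ≤ sSup (f '' S) :=
  calc s * u + c = sSup ((s * · + c) '' Ioo l u) := by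
        rw [image_affine_Ioo hs, csSup_Ioo (by gcongr)]
    _ = sSup (f '' Ioo l u) := by rw [hf.image_eq]
    _ ≤ sSup (f '' S) := csSup_le_csSup hbdd ((nonempty_Ioo.2 hlu).image f) (image_mono hsub)

/-- The shape of `z ↦ γ |μ(z)| + z σ²(z)` for a standardized two-point law whose atoms have
absolute values `A ≤ B`. -/
noncomputable def esseenProfile (A B s c d z : ℝ) : ℝ :=
  if z ≤ A then z else if z ≤ B then s * z + c else d

section EsseenProfile

variable {A B s c d T : ℝ}

theorem le_csSup_esseenProfile_left (hbdd : BddAbove (esseenProfile A B s c d '' Ioo 0 T))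
    (hA : 0 < A) (hAT : A < T) : A ≤ sSup (esseenProfile A B s c d '' Ioo 0 T) := by
  simpa using le_csSup_image_of_eqOn_affine (s := 1) (c := 0) hbdd hA one_pos
    (Ioo_subset_Ioo_right hAT.le) fun z hz => by simp [esseenProfile, hz.2.le]

theorem le_csSup_esseenProfile_mid {u : ℝ} (hbdd : BddAbove (esseenProfile A B s c d '' Ioo 0 T))
    (hA : 0 < A) (hs : 0 < s) (hAu : A < u) (huT : u ≤ T) (huB : u ≤ B) :
    s * u + c ≤ sSup (esseenProfile A B s c d '' Ioo 0 T) :=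
  le_csSup_image_of_eqOn_affine hbdd hAu hs (Ioo_subset_Ioo hA.le huT) fun z hz => by
    simp [esseenProfile, not_le.2 hz.1, hz.2.le.trans huB]

theorem csSup_esseenProfile_of_le (hT : 0 < T) (hTA : T ≤ A) :
    sSup (esseenProfile A B s c d '' Ioo 0 T) = T := by
  have hid : EqOn (esseenProfile A B s c d) id (Ioo 0 T) := fun z hz => by
    simp [esseenProfile, hz.2.le.trans hTA]
  rw [hid.image_eq, image_id, csSup_Ioo hT]

theorem csSup_esseenProfile_of_lt_of_le (hA : 0 < A) (hs : 0 < s) (hAT : A < T) (hTB : T ≤ B) :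
    sSup (esseenProfile A B s c d '' Ioo 0 T) = max A (s * T + c) := by
  have hle : ∀ z ∈ Ioo 0 T, esseenProfile A B s c d z ≤ max A (s * T + c) := by
    intro z hz
    unfold esseenProfile
    split_ifs with hzA hzB
    · exact le_max_of_le_left hzA
    · exact le_max_of_le_right (by gcongr; exact hz.2.le)
    · exact absurd (hz.2.le.trans hTB) hzB
  have hbdd : BddAbove (esseenProfile A B s c d '' Ioo 0 T) := ⟨_, forall_mem_image.2 hle⟩
  refine le_antisymm (csSup_le ((nonempty_Ioo.2 (hA.trans hAT)).image _)
    (forall_mem_image.2 hle)) (max_le ?_ ?_)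
  · exact le_csSup_esseenProfile_left hbdd hA hAT
  · exact le_csSup_esseenProfile_mid hbdd hA hs hAT le_rfl hTB

theorem csSup_esseenProfile_of_lt (hA : 0 < A) (hAB : A ≤ B) (hs : 0 < s) (hBT : B < T) :
    sSup (esseenProfile A B s c d '' Ioo 0 T) =
      max (max A (if A < B then s * B + c else 0)) d := by
  have hle : ∀ z ∈ Ioo 0 T, esseenProfile A B s c d z ≤
      max (max A (if A < B then s * B + c else 0)) d := by
    intro z hz
    unfold esseenProfile
    by_cases hzA : z ≤ A
    · simp only [if_pos hzA]
      exact le_max_of_le_left (le_max_of_le_left hzA)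
    by_cases hzB : z ≤ B
    · simp only [if_neg hzA, if_pos hzB, if_pos ((not_le.1 hzA).trans_le hzB)]
      exact le_max_of_le_left (le_max_of_le_right (by gcongr))
    · simp only [if_neg hzA, if_neg hzB]
      exact le_max_right _ _
  have hbdd : BddAbove (esseenProfile A B s c d '' Ioo 0 T) := ⟨_, forall_mem_image.2 hle⟩
  have hAT : A < T := hAB.trans_lt hBT
  have hA_le := le_csSup_esseenProfile_left hbdd hA hAT
  refine le_antisymm (csSup_le ((nonempty_Ioo.2 (hA.trans hAT)).image _)
    (forall_mem_image.2 hle)) (max_le (max_le hA_le ?_) ?_)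
  · split_ifs with hAB'
    · exact le_csSup_esseenProfile_mid hbdd hA hs hAB' hBT.le le_rfl
    · exact hA.le.trans hA_le
  · have hmid : (B + T) / 2 ∈ Ioo 0 T := ⟨by linarith, by linarith⟩
    refine le_csSup hbdd ⟨_, hmid, ?_⟩
    simp [esseenProfile, show ¬ (B + T) / 2 ≤ A by linarith, show ¬ (B + T) / 2 ≤ B by linarith]

end EsseenProfile

theorem sqrt_mul_mul_sqrt_div {x y : ℝ} (hx : 0 < x) (hy : 0 ≤ y) : √(x * y) * √(y / x) = y := by
  rw [← sqrt_mul (by positivity), show x * y * (y / x) = y ^ 2 by field_simp, sqrt_sq hy]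

theorem sqrt_div_le_sqrt_div {p q : ℝ} (hq : 0 < q) (hqp : q ≤ p) : √(q / p) ≤ √(p / q) :=
  sqrt_le_sqrt (by rw [div_le_div_iff₀ (hq.trans_le hqp) hq]; nlinarith)

theorem sqrt_div_lt_sqrt_div {p q : ℝ} (hq : 0 < q) (hqp : q < p) : √(q / p) < √(p / q) :=
  sqrt_lt_sqrt (div_pos hq (hq.trans hqp)).le
    (by rw [div_lt_div_iff₀ (hq.trans hqp) hq]; nlinarith)

theorem sqrt_mul_max_two_point_atoms {p q : ℝ} (hp : 0 < p) (hq : 0 < q) (hqp : q ≤ p)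
    (hpq : p + q = 1) (γ : ℝ) :
    √(p * q) * max (max √(q / p)
        (if √(q / p) < √(p / q) then p * √(p / q) + γ * (q * √(q / p)) else 0))
        (γ * (p * √(p / q) - q * √(q / p))) =
      max (max q (if 1 / 2 < p then γ * q ^ 2 + p ^ 2 else 0)) (γ * (p - q)) := by
  have hra : √(p * q) * √(q / p) = q := sqrt_mul_mul_sqrt_div hp hq.le
  have hrb : √(p * q) * √(p / q) = p := by
    rw [mul_comm p]; exact sqrt_mul_mul_sqrt_div hq hp.le
  have hif : √(p * q) * (if √(q / p) < √(p / q) then p * √(p / q) + γ * (q * √(q / p)) else 0) =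
      if 1 / 2 < p then γ * q ^ 2 + p ^ 2 else 0 := by
    by_cases hp_half : 1 / 2 < p
    · rw [if_pos (sqrt_div_lt_sqrt_div hq (by linarith)), if_pos hp_half]
      linear_combination p * hrb + γ * q * hra
    · have hq_eq : q = p := by linarith
      rw [if_neg (by rw [hq_eq]; exact lt_irrefl _), if_neg hp_half, mul_zero]
  rw [mul_max_of_nonneg _ _ (sqrt_nonneg _), mul_max_of_nonneg _ _ (sqrt_nonneg _), hra, hif]
  congr 1
  linear_combination γ * p * hrb - γ * q * hra + γ * (p - q) * hpq

theorem esseen_fun_two_point_eq_esseenProfile {Ω : Type*} [MeasurableSpace Ω] {μ : Measure Ω}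
    [IsProbabilityMeasure μ] {X : Ω → ℝ} (hX : Measurable X) {p q : ℝ} (hp : 0 < p) (hq : 0 < q)
    (hqp : q ≤ p) (hpq : p + q = 1)
    (hXp : μ {ω | X ω = √(q / p)} = ENNReal.ofReal p)
    (hXq : μ {ω | X ω = -√(p / q)} = ENNReal.ofReal q) (γ : ℝ) :
    (fun z => γ * |mu3 μ X z| + z * sig2 μ X z) =
      esseenProfile √(q / p) √(p / q) p (γ * (q * √(q / p)))
        (γ * (p * √(p / q) - q * √(q / p))) := by
  set a := √(q / p)
  set b := √(p / q)
  have ha : 0 < a := sqrt_pos.2 (by positivity)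
  have hb : 0 < b := sqrt_pos.2 (by positivity)
  have hpa : p * a ^ 2 = q := by rw [sq_sqrt (by positivity)]; field_simp
  have hqb : q * b ^ 2 = p := by rw [sq_sqrt (by positivity)]; field_simp
  have hab : a ≤ b := sqrt_div_le_sqrt_div hq hqp
  have hqa_pb : q * a ≤ p * b := mul_le_mul hqp hab ha.le hp.le
  ext z
  rw [mu3_of_two_point hX ha hb hp.le hq.le hpq hXp hXq,
    sig2_of_two_point hX ha hb hp.le hq.le hpq hXp hXq, esseenProfile]
  have hpa3 : p * a ^ 3 = q * a := by linear_combination a * hpa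
  have hqb3 : q * b ^ 3 = p * b := by linear_combination b * hqb
  by_cases hza : z ≤ a
  · have hzb := hza.trans hab
    rw [if_neg hza.not_gt, if_neg hzb.not_gt, if_pos hza, if_pos hzb, if_pos hza, hpa, hqb,
      sub_zero, abs_zero, add_comm q, hpq]
    ring
  by_cases hzb : z ≤ b
  · rw [if_pos (not_le.1 hza), if_neg hzb.not_gt, if_neg hza, if_pos hzb, if_neg hza, if_pos hzb,
      hpa3, hqb, sub_zero, abs_of_pos (mul_pos hq ha)]
    ring
  · rw [if_pos (not_le.1 hza), if_pos (not_le.1 hzb), if_neg hza, if_neg hzb, if_neg hza,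
      if_neg hzb, hpa3, hqb3, abs_of_nonpos (sub_nonpos.2 hqa_pb)]
    ring

theorem esseen_fraction_gstar_two_point_general
    {Ω : Type*} [MeasurableSpace Ω] (μ : Measure Ω) [IsProbabilityMeasure μ]
    (n : ℕ) (hn : 0 < n) (p : ℝ) (hp : p ∈ Set.Ico (1/2 : ℝ) 1) (q : ℝ) (hq : q = 1 - p)
    (X : Ω → ℝ) (hX : Measurable X)
    (hXp : μ {ω | X ω = Real.sqrt (q / p)} = ENNReal.ofReal p)
    (hXq : μ {ω | X ω = -Real.sqrt (p / q)} = ENNReal.ofReal q)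
    (ε γ : ℝ) (hε : 0 < ε) :
    ((n : ℝ) * ε ^ 2 ≤ q / p →
      (Real.sqrt n)⁻¹ *
        sSup ((fun z => γ * |mu3 μ X z| + z * sig2 μ X z) ''
          Set.Ioo (0 : ℝ) (ε * Real.sqrt n)) = ε) ∧
    (q / p < (n : ℝ) * ε ^ 2 → (n : ℝ) * ε ^ 2 ≤ p / q →
      (Real.sqrt n)⁻¹ *
        sSup ((fun z => γ * |mu3 μ X z| + z * sig2 μ X z) ''
          Set.Ioo (0 : ℝ) (ε * Real.sqrt n))
        = max (Real.sqrt (q / ((n : ℝ) * p)))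
            (γ * Real.sqrt (q ^ 3 / ((n : ℝ) * p)) + ε * p)) ∧
    (p / q < (n : ℝ) * ε ^ 2 →
      (Real.sqrt n)⁻¹ *
        sSup ((fun z => γ * |mu3 μ X z| + z * sig2 μ X z) ''
          Set.Ioo (0 : ℝ) (ε * Real.sqrt n))
        = max (max q (if 1/2 < p then γ * q ^ 2 + p ^ 2 else 0)) (γ * (p - q)) /
            Real.sqrt ((n : ℝ) * p * q)) := by
  obtain ⟨hp_half, hp_one⟩ := hp
  have hp0 : 0 < p := by linarith
  have hq0 : 0 < q := by linarith
  have hn0 : (0 : ℝ) < n := Nat.cast_pos.2 hn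
  have hT : 0 < ε * √n := by positivity
  have hT2 : (ε * √n) ^ 2 = n * ε ^ 2 := by rw [mul_pow, sq_sqrt hn0.le]; ring
  have ha : 0 < √(q / p) := sqrt_pos.2 (by positivity)
  rw [esseen_fun_two_point_eq_esseenProfile hX hp0 hq0 (by linarith) (by linarith) hXp hXq γ]
  refine ⟨fun h => ?_, fun h₁ h₂ => ?_, fun h => ?_⟩
  · rw [csSup_esseenProfile_of_le hT ((le_sqrt hT.le (by positivity)).2 (hT2 ▸ h))]
    field_simp
  · rw [csSup_esseenProfile_of_lt_of_le ha hp0 ((sqrt_lt' hT).2 (hT2 ▸ h₁))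
      ((le_sqrt hT.le (by positivity)).2 (hT2 ▸ h₂)), mul_max_of_nonneg _ _ (by positivity)]
    have hscale : ∀ x y, (√n)⁻¹ * √(x / y) = √(x / (n * y)) := fun x y => by
      rw [mul_comm (n : ℝ), ← div_div, sqrt_div' _ hn0.le, inv_mul_eq_div]
    have hqa : q * √(q / p) = √(q ^ 3 / p) := by
      rw [show q ^ 3 / p = q ^ 2 * (q / p) by ring, sqrt_mul (sq_nonneg q), sqrt_sq hq0.le]
    rw [hscale]
    congr 1
    rw [← hscale, ← hqa]
    field_simp
    ring
  · rw [csSup_esseenProfile_of_lt ha (sqrt_div_le_sqrt_div hq0 (by linarith)) hp0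
      ((sqrt_lt' hT).2 (hT2 ▸ h)),
      ← sqrt_mul_max_two_point_atoms hp0 hq0 (by linarith) (by linarith),
      mul_assoc, sqrt_mul hn0.le]
    field_simp

theorem esseen_fraction_gstar_two_point
    {Ω : Type*} [MeasurableSpace Ω] (μ : Measure Ω) [IsProbabilityMeasure μ]
    (n : ℕ) (hn : 0 < n) (p : ℝ) (hp : p ∈ Set.Ico (1/2 : ℝ) 1) (q : ℝ) (hq : q = 1 - p)
    (X : Ω → ℝ) (hX : Measurable X)
    (hXp : μ {ω | X ω = Real.sqrt (q / p)} = ENNReal.ofReal p)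
    (hXq : μ {ω | X ω = -Real.sqrt (p / q)} = ENNReal.ofReal q)
    (ε γ : ℝ) (hε : 0 < ε) (hγ : 0 < γ) :
    ((n : ℝ) * ε ^ 2 ≤ q / p →
      (Real.sqrt n)⁻¹ *
        sSup ((fun z => γ * |mu3 μ X z| + z * sig2 μ X z) ''
          Set.Ioo (0 : ℝ) (ε * Real.sqrt n)) = ε) ∧
    (q / p < (n : ℝ) * ε ^ 2 → (n : ℝ) * ε ^ 2 ≤ p / q →
      (Real.sqrt n)⁻¹ *
        sSup ((fun z => γ * |mu3 μ X z| + z * sig2 μ X z) ''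
          Set.Ioo (0 : ℝ) (ε * Real.sqrt n))
        = max (Real.sqrt (q / ((n : ℝ) * p)))
            (γ * Real.sqrt (q ^ 3 / ((n : ℝ) * p)) + ε * p)) ∧
    (p / q < (n : ℝ) * ε ^ 2 →
      (Real.sqrt n)⁻¹ *
        sSup ((fun z => γ * |mu3 μ X z| + z * sig2 μ X z) ''
          Set.Ioo (0 : ℝ) (ε * Real.sqrt n))
        = max (max q (if 1/2 < p then γ * q ^ 2 + p ^ 2 else 0)) (γ * (p - q)) /
            Real.sqrt ((n : ℝ) * p * q)) :=
  esseen_fraction_gstar_two_point_general μ n hn p hp q hq X hX hXp hXq ε γ hε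
end

section
/- Let n ∈ ℕ, p ∈ [1/2,1), q = 1−p, and let X be a random variable with P(X = √(q/p)) = p and P(X = −√(p/q)) = q. For all ε > 0 and γ > 0 the quantity sup_{0<z<ε√n} ( (γ/z)·|E[X³·1_{|X|<z}]| + E[X²·1_{|X|≥z}] ) equals: 1, if n·ε² ≤ q/p; max{1, γ·q + p}, if q/p < n·ε² ≤ p/q; and max{ 1, (γ·q + p)·1_{p>1/2}, γ·(p−q)/p }, if n·ε² > p/q. -/
/-!
With `a = √(q/p) ≤ b = √(p/q)` the moduli of the two atoms, the fraction is explicit in `z > 0`: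
it is `1` on `(0, a]`, `γq · a/z + p` on `(a, b]` and `γ(p - q)/p · b/z` on `(b, ∞)`, the last
because `X` has mean zero (`p a = q b`). Both non-constant pieces decrease in `z`, so each
contributes its limit at the left endpoint, and the supremum over `(0, ε√n)` is the maximum over
the pieces that this interval meets.
-/

open MeasureTheory Real Set

theorem integral_comp_eq_of_two_point {Ω : Type*} [MeasurableSpace Ω] {μ : Measure Ω}
    [IsProbabilityMeasure μ] {X : Ω → ℝ} (hX : Measurable X) {a b p q : ℝ} (hab : a ≠ b)
    (hp : 0 ≤ p) (hq : 0 ≤ q) (hpq : p + q = 1)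
    (ha : μ {ω | X ω = a} = ENNReal.ofReal p) (hb : μ {ω | X ω = b} = ENNReal.ofReal q)
    (h : ℝ → ℝ) : ∫ ω, h (X ω) ∂μ = p * h a + q * h b := by
  set A := {ω | X ω = a}
  set B := {ω | X ω = b}
  have hA : MeasurableSet A := hX (measurableSet_singleton a)
  have hB : MeasurableSet B := hX (measurableSet_singleton b)
  have hAB : Disjoint A B := disjoint_left.2 fun ω hωa hωb => hab (hωa.symm.trans hωb)
  have hae : A ∪ B ∈ ae μ := by
    rw [mem_ae_iff_prob_eq_one (hA.union hB), measure_union hAB hB, ha, hb,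
      ← ENNReal.ofReal_add hp hq, hpq, ENNReal.ofReal_one]
  have hsplit :
      (fun ω => h (X ω)) =ᵐ[μ] A.indicator (fun _ => h a) + B.indicator (fun _ => h b) := by
    filter_upwards [hae] with ω hω
    rcases hω with hωa | hωb
    · simp [indicator_of_mem hωa, indicator_of_notMem (disjoint_left.1 hAB hωa), hωa.out]
    · simp [indicator_of_mem hωb, indicator_of_notMem (disjoint_right.1 hAB hωb), hωb.out]
  rw [integral_congr_ae hsplit,
    integral_add' ((integrable_const _).indicator hA) ((integrable_const _).indicator hB),
    integral_indicator_const _ hA, integral_indicator_const _ hB, measureReal_def,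
    measureReal_def, ha, hb, ENNReal.toReal_ofReal hp, ENNReal.toReal_ofReal hq, smul_eq_mul,
    smul_eq_mul]

theorem isLUB_image_mul_div_add {I : Set ℝ} {s c e : ℝ} (hs : 0 < s) (hc : 0 ≤ c)
    (hI : IsGLB I s) (hne : I.Nonempty) : IsLUB ((fun z => c * (s / z) + e) '' I) (c + e) := by
  refine hI.isLUB_of_tendsto (fun x hx y hy hxy => ?_) hne ?_
  · have : 0 < x := hs.trans_le (hI.1 hx)
    gcongr
  · have hcont : ContinuousAt (fun z => c * (s / z) + e) s := by
      fun_prop (disch := exact hs.ne')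
    simpa [div_self hs.ne'] using hcont.tendsto.mono_left nhdsWithin_le_nhds

section Piecewise

variable {F : ℝ → ℝ} {I : Set ℝ} {a b c d e k T : ℝ}

theorem isLUB_image_of_eqOn_const (hF : EqOn F (fun _ => k) I) (hI : I.Nonempty) :
    IsLUB (F '' I) k := by
  rw [hF.image_eq, hI.image_const]
  exact isLUB_singleton

theorem isLUB_image_of_eqOn_mul_div_add (hF : EqOn F (fun z => c * (a / z) + e) I)
    (ha : 0 < a) (hc : 0 ≤ c) (hI : IsGLB I a) (hne : I.Nonempty) : IsLUB (F '' I) (c + e) :=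
  hF.image_eq ▸ isLUB_image_mul_div_add ha hc hI hne

theorem isLUB_image_of_eqOn_mul_div (hF : EqOn F (fun z => c * (a / z)) I)
    (ha : 0 < a) (hc : 0 ≤ c) (hI : IsGLB I a) (hne : I.Nonempty) : IsLUB (F '' I) c := by
  simpa using isLUB_image_of_eqOn_mul_div_add (e := 0) (by simpa using hF) ha hc hI hne

theorem sSup_image_Ioo_zero_of_le (h₁ : EqOn F (fun _ => k) (Ioc 0 a)) (hT : 0 < T)
    (hTa : T ≤ a) : sSup (F '' Ioo 0 T) = k :=
  (isLUB_image_of_eqOn_const (h₁.mono (Ioo_subset_Ioc_self.trans (Ioc_subset_Ioc_right hTa)))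
    (nonempty_Ioo.2 hT)).csSup_eq ((nonempty_Ioo.2 hT).image F)

theorem sSup_image_Ioo_zero_of_lt (h₁ : EqOn F (fun _ => k) (Ioc 0 a))
    (h₂ : EqOn F (fun z => c * (a / z) + e) (Ioo a T)) (ha : 0 < a) (hc : 0 ≤ c) (haT : a < T) :
    sSup (F '' Ioo 0 T) = max k (c + e) := by
  rw [← Ioc_union_Ioo_eq_Ioo ha.le haT, image_union]
  exact ((isLUB_image_of_eqOn_const h₁ (nonempty_Ioc.2 ha)).union
    (isLUB_image_of_eqOn_mul_div_add h₂ ha hc (isGLB_Ioo haT) (nonempty_Ioo.2 haT))).csSup_eq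
    ((nonempty_Ioc.2 ha).image F |>.inl)

theorem sSup_image_Ioo_zero_of_lt' (h₁ : EqOn F (fun _ => k) (Ioc 0 a))
    (h₂ : EqOn F (fun z => d * (a / z)) (Ioo a T)) (ha : 0 < a) (hd : 0 ≤ d) (haT : a < T) :
    sSup (F '' Ioo 0 T) = max k d := by
  simpa using sSup_image_Ioo_zero_of_lt (e := 0) h₁ (by simpa using h₂) ha hd haT

theorem sSup_image_Ioo_zero_of_lt_of_lt (h₁ : EqOn F (fun _ => k) (Ioc 0 a))
    (h₂ : EqOn F (fun z => c * (a / z) + e) (Ioc a b)) (h₃ : EqOn F (fun z => d * (b / z)) (Ioo b T))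
    (ha : 0 < a) (hc : 0 ≤ c) (hd : 0 ≤ d) (hab : a < b) (hbT : b < T) :
    sSup (F '' Ioo 0 T) = max (max k (c + e)) d := by
  rw [← Ioc_union_Ioo_eq_Ioo (ha.trans hab).le hbT, ← Ioc_union_Ioc_eq_Ioc ha.le hab.le,
    image_union, image_union]
  exact (((isLUB_image_of_eqOn_const h₁ (nonempty_Ioc.2 ha)).union
    (isLUB_image_of_eqOn_mul_div_add h₂ ha hc (isGLB_Ioc hab) (nonempty_Ioc.2 hab))).union
    (isLUB_image_of_eqOn_mul_div h₃ (ha.trans hab) hd (isGLB_Ioo hbT) (nonempty_Ioo.2 hbT))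
    ).csSup_eq ((nonempty_Ioc.2 ha).image F |>.inl |>.inl)

end Piecewise

theorem mul_sq_sqrt_div {p q : ℝ} (hp : 0 < p) (hq : 0 ≤ q) : p * √(q / p) ^ 2 = q := by
  rw [sq_sqrt (by positivity)]
  field_simp

theorem mul_sqrt_div_eq_mul_sqrt_div {p q : ℝ} (hp : 0 < p) (hq : 0 < q) :
    p * √(q / p) = q * √(p / q) := by
  refine (pow_left_inj₀ (by positivity) (by positivity) two_ne_zero).1 ?_
  linear_combination p * mul_sq_sqrt_div hp hq.le - q * mul_sq_sqrt_div hq hp.le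

/-- `X` takes the value `√(q/p)` with probability `p` and `-√(p/q)` with probability `q`: the
two-point laws with mean `0` and variance `1`. -/
structure HasStdTwoPointLaw {Ω : Type*} [MeasurableSpace Ω] (μ : Measure Ω) (X : Ω → ℝ)
    (p q : ℝ) : Prop where
  measurable : Measurable X
  pos_left : 0 < p
  pos_right : 0 < q
  add_eq_one : p + q = 1
  measure_eq_left : μ {ω | X ω = √(q / p)} = ENNReal.ofReal p
  measure_eq_right : μ {ω | X ω = -√(p / q)} = ENNReal.ofReal q

/-- The fraction inside `L_{E,n}(g_C, ε, γ)`, as a function of the truncation level `z`. -/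
noncomputable def esseenFraction {Ω : Type*} [MeasurableSpace Ω] (μ : Measure Ω) (X : Ω → ℝ)
    (γ z : ℝ) : ℝ :=
  γ / z * |mu3 μ X z| + sig2 μ X z

namespace HasStdTwoPointLaw

variable {Ω : Type*} [MeasurableSpace Ω] {μ : Measure Ω} [IsProbabilityMeasure μ] {X : Ω → ℝ}
  {p q : ℝ}

theorem integral_comp (hX : HasStdTwoPointLaw μ X p q) (h : ℝ → ℝ) :
    ∫ ω, h (X ω) ∂μ = p * h √(q / p) + q * h (-√(p / q)) := by
  have hpos : 0 < √(q / p) := sqrt_pos.2 (div_pos hX.pos_right hX.pos_left)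
  have hneg : -√(p / q) < 0 := neg_neg_iff_pos.2 (sqrt_pos.2 (div_pos hX.pos_left hX.pos_right))
  exact integral_comp_eq_of_two_point hX.measurable (hneg.trans hpos).ne' hX.pos_left.le
    hX.pos_right.le hX.add_eq_one hX.measure_eq_left hX.measure_eq_right h

theorem mu3_eq (hX : HasStdTwoPointLaw μ X p q) (z : ℝ) :
    mu3 μ X z =
      (if √(q / p) < z then q * √(q / p) else 0) - if √(p / q) < z then p * √(p / q) else 0 := by
  have ha := mul_sq_sqrt_div hX.pos_left hX.pos_right.le
  have hb := mul_sq_sqrt_div hX.pos_right hX.pos_left.le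
  rw [mu3, hX.integral_comp (fun t => if |t| < z then t ^ 3 else 0), abs_neg,
    abs_of_nonneg (sqrt_nonneg _), abs_of_nonneg (sqrt_nonneg _)]
  split_ifs
  · linear_combination √(q / p) * ha - √(p / q) * hb
  · linear_combination √(q / p) * ha
  · linear_combination -√(p / q) * hb
  · ring

theorem sig2_eq (hX : HasStdTwoPointLaw μ X p q) (z : ℝ) :
    sig2 μ X z = (if z ≤ √(q / p) then q else 0) + if z ≤ √(p / q) then p else 0 := by
  have ha := mul_sq_sqrt_div hX.pos_left hX.pos_right.le
  have hb := mul_sq_sqrt_div hX.pos_right hX.pos_left.le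
  rw [sig2, hX.integral_comp (fun t => if z ≤ |t| then t ^ 2 else 0), abs_neg,
    abs_of_nonneg (sqrt_nonneg _), abs_of_nonneg (sqrt_nonneg _), neg_sq]
  split_ifs <;> simp [ha, hb]

theorem esseenFraction_eqOn_Iic (hX : HasStdTwoPointLaw μ X p q) (hqp : q ≤ p) (γ : ℝ) :
    EqOn (esseenFraction μ X γ) (fun _ => 1) (Iic √(q / p)) := by
  intro z (hz : z ≤ _)
  have hz' := hz.trans (sqrt_div_le_sqrt_div hX.pos_right hqp)
  simp [esseenFraction, hX.mu3_eq, hX.sig2_eq, hz, hz', not_lt.2 hz, not_lt.2 hz', add_comm q,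
    hX.add_eq_one]

theorem esseenFraction_eqOn_Ioc (hX : HasStdTwoPointLaw μ X p q) (γ : ℝ) :
    EqOn (esseenFraction μ X γ) (fun z => γ * q * (√(q / p) / z) + p)
      (Ioc √(q / p) √(p / q)) := by
  rintro z ⟨hza, hzb⟩
  simp only [esseenFraction, hX.mu3_eq, hX.sig2_eq, if_pos hza, if_neg (not_lt.2 hzb),
    if_neg (not_le.2 hza), if_pos hzb, sub_zero, zero_add,
    abs_of_nonneg (mul_nonneg hX.pos_right.le (sqrt_nonneg _))]
  ring

theorem esseenFraction_eqOn_Ioi (hX : HasStdTwoPointLaw μ X p q) (hqp : q ≤ p) (γ : ℝ) :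
    EqOn (esseenFraction μ X γ) (fun z => γ * (p - q) / p * (√(p / q) / z))
      (Ioi √(p / q)) := by
  intro z (hzb : _ < z)
  have hza := (sqrt_div_le_sqrt_div hX.pos_right hqp).trans_lt hzb
  have hdiff : p * (p * √(p / q) - q * √(q / p)) = (p - q) * √(p / q) := by
    linear_combination -q * mul_sqrt_div_eq_mul_sqrt_div hX.pos_left hX.pos_right +
      (p - q) * √(p / q) * hX.add_eq_one
  have hsign : q * √(q / p) ≤ p * √(p / q) :=
    mul_le_mul hqp (sqrt_div_le_sqrt_div hX.pos_right hqp) (sqrt_nonneg _) hX.pos_left.le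
  simp only [esseenFraction, hX.mu3_eq, hX.sig2_eq, if_pos hza, if_pos hzb,
    if_neg (not_le.2 hza), if_neg (not_le.2 hzb), add_zero]
  rw [abs_of_nonpos (sub_nonpos.2 hsign), neg_sub]
  have hz : z ≠ 0 := ((sqrt_nonneg _).trans_lt hzb).ne'
  have hp : p ≠ 0 := hX.pos_left.ne'
  field_simp
  linear_combination γ * hdiff

end HasStdTwoPointLaw

theorem esseen_fraction_gconst_two_point
    {Ω : Type*} [MeasurableSpace Ω] (μ : Measure Ω) [IsProbabilityMeasure μ]
    (n : ℕ) (hn : 0 < n) (p : ℝ) (hp : p ∈ Set.Ico (1/2 : ℝ) 1) (q : ℝ) (hq : q = 1 - p)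
    (X : Ω → ℝ) (hX : Measurable X)
    (hXp : μ {ω | X ω = Real.sqrt (q / p)} = ENNReal.ofReal p)
    (hXq : μ {ω | X ω = -Real.sqrt (p / q)} = ENNReal.ofReal q)
    (ε γ : ℝ) (hε : 0 < ε) (hγ : 0 < γ) :
    ((n : ℝ) * ε ^ 2 ≤ q / p →
      sSup ((fun z => γ / z * |mu3 μ X z| + sig2 μ X z) ''
        Set.Ioo (0 : ℝ) (ε * Real.sqrt n)) = 1) ∧
    (q / p < (n : ℝ) * ε ^ 2 → (n : ℝ) * ε ^ 2 ≤ p / q →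
      sSup ((fun z => γ / z * |mu3 μ X z| + sig2 μ X z) ''
        Set.Ioo (0 : ℝ) (ε * Real.sqrt n)) = max 1 (γ * q + p)) ∧
    (p / q < (n : ℝ) * ε ^ 2 →
      sSup ((fun z => γ / z * |mu3 μ X z| + sig2 μ X z) ''
        Set.Ioo (0 : ℝ) (ε * Real.sqrt n))
        = max (max 1 (if 1/2 < p then γ * q + p else 0)) (γ * (p - q) / p)) := by
  obtain ⟨hp₁, hp₂⟩ := hp
  have hqp : q ≤ p := by linarith
  have hlaw : HasStdTwoPointLaw μ X p q := ⟨hX, by linarith, by linarith, by linarith, hXp, hXq⟩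
  have ha : 0 < √(q / p) := sqrt_pos.2 (div_pos hlaw.pos_right hlaw.pos_left)
  have hT : 0 < ε * √n := mul_pos hε (sqrt_pos.2 (Nat.cast_pos.2 hn))
  have hT2 : (ε * √n) ^ 2 = n * ε ^ 2 := by rw [mul_pow, sq_sqrt n.cast_nonneg, mul_comm]
  have h₁ := (hlaw.esseenFraction_eqOn_Iic hqp γ).mono (Ioc_subset_Iic_self (a := 0))
  have hc : 0 ≤ γ * q := mul_nonneg hγ.le hlaw.pos_right.le
  have hd : 0 ≤ γ * (p - q) / p :=
    div_nonneg (mul_nonneg hγ.le (sub_nonneg.2 hqp)) hlaw.pos_left.le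
  refine ⟨fun hTa => ?_, fun haT hTb => ?_, fun hbT => ?_⟩
  · exact sSup_image_Ioo_zero_of_le h₁ hT ((le_sqrt' hT).2 (hT2 ▸ hTa))
  · exact sSup_image_Ioo_zero_of_lt h₁ ((hlaw.esseenFraction_eqOn_Ioc γ).mono
      (Ioo_subset_Ioc_self.trans (Ioc_subset_Ioc_right ((le_sqrt' hT).2 (hT2 ▸ hTb))))) ha hc
      ((sqrt_lt' hT).2 (hT2 ▸ haT))
  · have hbT' : √(p / q) < ε * √n := (sqrt_lt' hT).2 (hT2 ▸ hbT)
    split_ifs with hp'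
    · exact sSup_image_Ioo_zero_of_lt_of_lt h₁ (hlaw.esseenFraction_eqOn_Ioc γ)
        ((hlaw.esseenFraction_eqOn_Ioi hqp γ).mono Ioo_subset_Ioi_self) ha hc hd
        (sqrt_div_lt_sqrt_div hlaw.pos_right (by linarith)) hbT'
    · -- for `p = 1/2` both atoms have modulus one and the middle regime is empty
      have hpq : p = q := by linarith
      rw [max_eq_left zero_le_one]
      subst hpq
      exact sSup_image_Ioo_zero_of_lt' h₁ ((hlaw.esseenFraction_eqOn_Ioi hqp γ).mono
        Ioo_subset_Ioi_self) ha hd hbT'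
end

section
/- Let n ∈ ℕ, p ∈ [1/2,1), q = 1−p, and let X be a random variable with P(X = √(q/p)) = p and P(X = −√(p/q)) = q. For all ε > 0 and γ > 0 the quantity (γ/(ε√n))·|E[X³·1_{|X|<ε√n}]| + sup_{0<z<ε√n} E[X²·1_{|X|≥z}] equals: 1, if n·ε² ≤ q/p; (γ/ε)·√(q³/(np)) + 1, if q/p < n·ε² ≤ p/q; and γ·(p−q)/(ε·√(n·p·q)) + 1, if n·ε² > p/q. -/
open MeasureTheory Real Set

/-!
`X` takes only the values `a = √(q/p)` and `b = -√(p/q)`, with `a ≤ |b|`, so every truncated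
moment is a sum of at most two atoms. Below `a` nothing is truncated from `E X² = 1`, so the
supremum of the truncated second moment is `1`. The truncated third moment at `ε√n` picks up the
atom `a` once `nε² > q/p`, and both atoms once `nε² > p/q`, where `p a³ + q b³ = (q - p)/√(pq)`.
-/

structure IsTwoPointLaw {Ω : Type*} [MeasurableSpace Ω] (μ : Measure Ω) (X : Ω → ℝ)
    (a b p q : ℝ) : Prop where
  measurable : Measurable X
  ne : a ≠ b
  nonneg_left : 0 ≤ p
  nonneg_right : 0 ≤ q
  add_eq_one : p + q = 1
  measure_left : μ {ω | X ω = a} = ENNReal.ofReal p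
  measure_right : μ {ω | X ω = b} = ENNReal.ofReal q

namespace IsTwoPointLaw

variable {Ω : Type*} [MeasurableSpace Ω] {μ : Measure Ω} [IsProbabilityMeasure μ] {X : Ω → ℝ}
  {a b p q : ℝ}

theorem integral_comp (hX : IsTwoPointLaw μ X a b p q) (h : ℝ → ℝ) :
    ∫ ω, h (X ω) ∂μ = h a * p + h b * q := by
  set A := {ω | X ω = a}
  set B := {ω | X ω = b}
  have hA : MeasurableSet A := hX.measurable (measurableSet_singleton a)
  have hB : MeasurableSet B := hX.measurable (measurableSet_singleton b)
  have hAB : Disjoint A B := Set.disjoint_left.2 fun _ ha hb => hX.ne (ha.symm.trans hb)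
  have h_ae : ∀ᵐ ω ∂μ, ω ∈ A ∪ B := by
    rw [ae_iff, ← compl_ofPred, ofPred_mem_eq, prob_compl_eq_zero_iff (hA.union hB),
      measure_union hAB hB, hX.measure_left, hX.measure_right,
      ← ENNReal.ofReal_add hX.nonneg_left hX.nonneg_right, hX.add_eq_one, ENNReal.ofReal_one]
  have h_eq : (fun ω => h (X ω)) =ᵐ[μ]
      fun ω => A.indicator (fun _ => h a) ω + B.indicator (fun _ => h b) ω := by
    filter_upwards [h_ae] with ω hω
    rcases hω with hωA | hωB
    · rw [indicator_of_mem hωA, indicator_of_notMem (hAB.notMem_of_mem_left hωA), add_zero,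
        show X ω = a from hωA]
    · rw [indicator_of_mem hωB, indicator_of_notMem (hAB.notMem_of_mem_right hωB), zero_add,
        show X ω = b from hωB]
  rw [integral_congr_ae h_eq, integral_add ((integrable_const _).indicator hA)
    ((integrable_const _).indicator hB), integral_indicator_const _ hA,
    integral_indicator_const _ hB, measureReal_def, measureReal_def, hX.measure_left, hX.measure_right,
    ENNReal.toReal_ofReal hX.nonneg_left, ENNReal.toReal_ofReal hX.nonneg_right,
    smul_eq_mul, smul_eq_mul, mul_comm p, mul_comm q]

theorem sig2_eq (hX : IsTwoPointLaw μ X a b p q) (z : ℝ) :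
    sig2 μ X z = (if z ≤ |a| then a ^ 2 * p else 0) + (if z ≤ |b| then b ^ 2 * q else 0) := by
  rw [sig2, hX.integral_comp (fun x => if z ≤ |x| then x ^ 2 else 0)]
  simp only [ite_mul, zero_mul]

theorem mu3_eq (hX : IsTwoPointLaw μ X a b p q) (z : ℝ) :
    mu3 μ X z = (if |a| < z then a ^ 3 * p else 0) + (if |b| < z then b ^ 3 * q else 0) := by
  rw [mu3, hX.integral_comp (fun x => if |x| < z then x ^ 3 else 0)]
  simp only [ite_mul, zero_mul]

/-- The supremum is attained at every `z` below `|a|`, `|b|` and `T`, where no mass is truncated. -/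
theorem sSup_sig2_Ioo (hX : IsTwoPointLaw μ X a b p q) (ha : a ≠ 0) (hb : b ≠ 0) {T : ℝ}
    (hT : 0 < T) : sSup ((fun z => sig2 μ X z) '' Ioo 0 T) = a ^ 2 * p + b ^ 2 * q := by
  have hp := hX.nonneg_left
  have hq := hX.nonneg_right
  set m := min (min |a| |b|) T
  have hm : 0 < m := lt_min (lt_min (abs_pos.2 ha) (abs_pos.2 hb)) hT
  have hma : m ≤ |a| := (min_le_left _ _).trans (min_le_left _ _)
  have hmb : m ≤ |b| := (min_le_left _ _).trans (min_le_right _ _)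
  have hmT : m ≤ T := min_le_right _ _
  refine IsGreatest.csSup_eq ⟨⟨m / 2, ⟨by positivity, by linarith⟩, ?_⟩, ?_⟩
  · simp only [hX.sig2_eq, if_pos (show m / 2 ≤ |a| by linarith),
      if_pos (show m / 2 ≤ |b| by linarith)]
  · rintro _ ⟨z, -, rfl⟩
    simp only [hX.sig2_eq]
    gcongr <;> split_ifs <;> first | rfl | positivity

end IsTwoPointLaw

theorem sqrt_div_pow_three_mul_div_sqrt {p q n : ℝ} (hp : 0 < p) (hq : 0 ≤ q) (hn : 0 ≤ n) :
    √(q / p) ^ 3 * p / √n = √(q ^ 3 / (n * p)) := by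
  have hq3 : √(q ^ 3) = √q ^ 3 := by
    rw [show q ^ 3 = (√q ^ 3) ^ 2 by rw [← pow_mul, mul_comm, pow_mul, sq_sqrt hq],
      sqrt_sq (by positivity)]
  rw [sqrt_div' _ (mul_nonneg hn hp.le), sqrt_mul hn, sqrt_div' _ hp.le, hq3]
  have hsp := sq_sqrt hp.le
  field_simp
  rw [hsp]

theorem sqrt_div_pow_three_mul_add {p q : ℝ} (hp : 0 < p) (hq : 0 < q) (hpq : p + q = 1) :
    √(q / p) ^ 3 * p + (-√(p / q)) ^ 3 * q = (q - p) / √(p * q) := by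
  rw [sqrt_div' _ hp.le, sqrt_div' _ hq.le, sqrt_mul hp.le]
  have := sqrt_pos.2 hp
  have := sqrt_pos.2 hq
  field_simp
  rw [show √q ^ 6 = (√q ^ 2) ^ 3 by ring, show √p ^ 6 = (√p ^ 2) ^ 3 by ring, sq_sqrt hp.le,
    sq_sqrt hq.le]
  linear_combination q * p * (q - p) * hpq

theorem rozovskii_fraction_gconst_two_point_general
    {Ω : Type*} [MeasurableSpace Ω] (μ : Measure Ω) [IsProbabilityMeasure μ]
    (n : ℕ) (hn : 0 < n) (p : ℝ) (hp : p ∈ Set.Ico (1/2 : ℝ) 1) (q : ℝ) (hq : q = 1 - p)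
    (X : Ω → ℝ) (hX : Measurable X)
    (hXp : μ {ω | X ω = Real.sqrt (q / p)} = ENNReal.ofReal p)
    (hXq : μ {ω | X ω = -Real.sqrt (p / q)} = ENNReal.ofReal q)
    (ε γ : ℝ) (hε : 0 < ε) :
    ((n : ℝ) * ε ^ 2 ≤ q / p →
      γ / (ε * Real.sqrt n) * |mu3 μ X (ε * Real.sqrt n)| +
        sSup ((fun z => sig2 μ X z) '' Set.Ioo (0 : ℝ) (ε * Real.sqrt n)) = 1) ∧
    (q / p < (n : ℝ) * ε ^ 2 → (n : ℝ) * ε ^ 2 ≤ p / q →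
      γ / (ε * Real.sqrt n) * |mu3 μ X (ε * Real.sqrt n)| +
        sSup ((fun z => sig2 μ X z) '' Set.Ioo (0 : ℝ) (ε * Real.sqrt n))
        = γ / ε * Real.sqrt (q ^ 3 / ((n : ℝ) * p)) + 1) ∧
    (p / q < (n : ℝ) * ε ^ 2 →
      γ / (ε * Real.sqrt n) * |mu3 μ X (ε * Real.sqrt n)| +
        sSup ((fun z => sig2 μ X z) '' Set.Ioo (0 : ℝ) (ε * Real.sqrt n))
        = γ * (p - q) / (ε * Real.sqrt ((n : ℝ) * p * q)) + 1) := by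
  obtain ⟨hp_half, hp_one⟩ := hp
  have hp0 : 0 < p := by linarith
  have hq0 : 0 < q := by linarith
  have ha : 0 < √(q / p) := sqrt_pos.2 (div_pos hq0 hp0)
  have hb : 0 < √(p / q) := sqrt_pos.2 (div_pos hp0 hq0)
  have hab : √(q / p) ≤ √(p / q) :=
    sqrt_le_sqrt (div_le_div₀ hp0.le (by linarith) hq0 (by linarith))
  have hlaw : IsTwoPointLaw μ X (√(q / p)) (-√(p / q)) p q :=
    ⟨hX, by linarith, hp0.le, hq0.le, by linarith, hXp, hXq⟩
  set T := ε * √n with hT_def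
  have hT : 0 < T := mul_pos hε (sqrt_pos.2 (Nat.cast_pos.2 hn))
  have hT2 : T ^ 2 = n * ε ^ 2 := by rw [mul_pow, sq_sqrt n.cast_nonneg, mul_comm]
  have hSup : sSup ((fun z => sig2 μ X z) '' Ioo 0 T) = 1 := by
    rw [hlaw.sSup_sig2_Ioo ha.ne' (neg_ne_zero.2 hb.ne') hT, neg_sq, sq_sqrt (by positivity),
      sq_sqrt (by positivity), div_mul_cancel₀ _ hp0.ne', div_mul_cancel₀ _ hq0.ne']
    linarith
  rw [hlaw.mu3_eq, abs_of_pos ha, abs_neg, abs_of_pos hb, hSup]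
  refine ⟨fun h => ?_, fun h₁ h₂ => ?_, fun h => ?_⟩
  · have hTa : T ≤ √(q / p) := (le_sqrt hT.le (by positivity)).2 (hT2 ▸ h)
    simp [hTa.not_gt, (hTa.trans hab).not_gt]
  · have haT : √(q / p) < T := (sqrt_lt' hT).2 (hT2 ▸ h₁)
    have hTb : T ≤ √(p / q) := (le_sqrt hT.le (by positivity)).2 (hT2 ▸ h₂)
    rw [if_pos haT, if_neg hTb.not_gt, add_zero, abs_of_pos (by positivity),
      ← sqrt_div_pow_three_mul_div_sqrt hp0 hq0.le n.cast_nonneg]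
    ring
  · have hbT : √(p / q) < T := (sqrt_lt' hT).2 (hT2 ▸ h)
    rw [if_pos (hab.trans_lt hbT), if_pos hbT, sqrt_div_pow_three_mul_add hp0 hq0 (by linarith),
      abs_div, abs_sub_comm, abs_of_nonneg (by linarith), abs_of_pos (by positivity), mul_assoc,
      sqrt_mul n.cast_nonneg, hT_def]
    field_simp

theorem rozovskii_fraction_gconst_two_point
    {Ω : Type*} [MeasurableSpace Ω] (μ : Measure Ω) [IsProbabilityMeasure μ]
    (n : ℕ) (hn : 0 < n) (p : ℝ) (hp : p ∈ Set.Ico (1/2 : ℝ) 1) (q : ℝ) (hq : q = 1 - p)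
    (X : Ω → ℝ) (hX : Measurable X)
    (hXp : μ {ω | X ω = Real.sqrt (q / p)} = ENNReal.ofReal p)
    (hXq : μ {ω | X ω = -Real.sqrt (p / q)} = ENNReal.ofReal q)
    (ε γ : ℝ) (hε : 0 < ε) (hγ : 0 < γ) :
    ((n : ℝ) * ε ^ 2 ≤ q / p →
      γ / (ε * Real.sqrt n) * |mu3 μ X (ε * Real.sqrt n)| +
        sSup ((fun z => sig2 μ X z) '' Set.Ioo (0 : ℝ) (ε * Real.sqrt n)) = 1) ∧
    (q / p < (n : ℝ) * ε ^ 2 → (n : ℝ) * ε ^ 2 ≤ p / q →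
      γ / (ε * Real.sqrt n) * |mu3 μ X (ε * Real.sqrt n)| +
        sSup ((fun z => sig2 μ X z) '' Set.Ioo (0 : ℝ) (ε * Real.sqrt n))
        = γ / ε * Real.sqrt (q ^ 3 / ((n : ℝ) * p)) + 1) ∧
    (p / q < (n : ℝ) * ε ^ 2 →
      γ / (ε * Real.sqrt n) * |mu3 μ X (ε * Real.sqrt n)| +
        sSup ((fun z => sig2 μ X z) '' Set.Ioo (0 : ℝ) (ε * Real.sqrt n))
        = γ * (p - q) / (ε * Real.sqrt ((n : ℝ) * p * q)) + 1) :=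
  rozovskii_fraction_gconst_two_point_general μ n hn p hp q hq X hX hXp hXq ε γ hε
end

section
/- On the interval p ∈ (0,1) the function φ(p) = Φ(√(p/(1−p))) is strictly increasing, its derivative equals φ'(p) = exp(−p/(2(1−p))) / (2·√(2π)·√(p·(1−p)³)), and this derivative is strictly decreasing on (0,1). -/
open MeasureTheory Real Set

/-- The standard normal distribution function. -/
noncomputable def Phi (x : ℝ) : ℝ :=
  ∫ t in Set.Iic x, Real.exp (-t ^ 2 / 2) / Real.sqrt (2 * Real.pi)

/-!
The derivative of `Φ` is the standard Gaussian density, so the chain rule applied to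
`φ(p) = Φ(√x)`, `x = p / (1 - p)`, together with `√(p (1-p)³) = √x · (1-p)²`, gives the stated
positive formula for `φ'`. The logarithmic derivative of `φ'` is `-(2p-1)² / (2p(1-p)²)`, which is
negative except at `p = 1/2`; so `φ'` is strictly decreasing on `(0, 1/2]` and on `[1/2, 1)`,
hence on `(0, 1)`.
-/

noncomputable def phi (p : ℝ) : ℝ :=
  Phi √(p / (1 - p))

noncomputable def phiDeriv (p : ℝ) : ℝ :=
  exp (-p / (2 * (1 - p))) / (2 * √(2 * π) * √(p * (1 - p) ^ 3))

theorem hasDerivAt_integral_Iic {E : Type*} [NormedAddCommGroup E] [NormedSpace ℝ E]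
    [CompleteSpace E] {g : ℝ → E} {x : ℝ} (hg : Integrable g) (hgx : ContinuousAt g x) :
    HasDerivAt (fun u => ∫ t in Iic u, g t) (g x) x := by
  have hFTC : HasDerivAt (fun u => ∫ t in (0 : ℝ)..u, g t) (g x) x :=
    intervalIntegral.integral_hasDerivAt_right hg.intervalIntegrable
      (hg.aestronglyMeasurable.stronglyMeasurableAtFilter) hgx
  refine (hFTC.const_add (∫ t in Iic 0, g t)).congr_of_eventuallyEq (.of_forall fun u => ?_)
  dsimp only
  rw [← intervalIntegral.integral_Iic_sub_Iic hg.integrableOn hg.integrableOn]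
  abel

theorem integrable_exp_neg_sq_div_two_div_sqrt :
    Integrable (fun t : ℝ => exp (-t ^ 2 / 2) / √(2 * π)) := by
  convert (integrable_exp_neg_mul_sq (b := 1 / 2) (by norm_num)).div_const √(2 * π) using 4
  ring

theorem hasDerivAt_Phi (x : ℝ) : HasDerivAt Phi (exp (-x ^ 2 / 2) / √(2 * π)) x :=
  hasDerivAt_integral_Iic integrable_exp_neg_sq_div_two_div_sqrt (by fun_prop)

theorem sqrt_mul_one_sub_pow_three {p : ℝ} (hp : p ∈ Ioo 0 1) :
    √(p * (1 - p) ^ 3) = √(p / (1 - p)) * (1 - p) ^ 2 := by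
  have h1p : 0 < 1 - p := sub_pos.2 hp.2
  have : p * (1 - p) ^ 3 = p / (1 - p) * ((1 - p) ^ 2) ^ 2 := by field_simp
  rw [this, sqrt_mul (div_pos hp.1 h1p).le, sqrt_sq (sq_nonneg _)]

theorem hasDerivAt_phi {p : ℝ} (hp : p ∈ Ioo 0 1) : HasDerivAt phi (phiDeriv p) p := by
  have h1p : 0 < 1 - p := sub_pos.2 hp.2
  have hx : 0 < p / (1 - p) := div_pos hp.1 h1p
  have hdiv : HasDerivAt (fun p => p / (1 - p)) (1 / (1 - p) ^ 2) p :=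
    ((hasDerivAt_id' p).div ((hasDerivAt_id' p).const_sub 1) h1p.ne').congr_deriv (by ring)
  refine ((hasDerivAt_Phi _).comp p (hdiv.sqrt hx.ne')).congr_deriv ?_
  rw [phiDeriv, sq_sqrt hx.le, sqrt_mul_one_sub_pow_three hp]
  have : 0 < √(p / (1 - p)) := sqrt_pos.2 hx
  field_simp

theorem phiDeriv_pos {p : ℝ} (hp : p ∈ Ioo 0 1) : 0 < phiDeriv p := by
  have h1p : 0 < 1 - p := sub_pos.2 hp.2
  have := hp.1
  unfold phiDeriv
  positivity

theorem hasDerivAt_phiDeriv {p : ℝ} (hp : p ∈ Ioo 0 1) :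
    HasDerivAt phiDeriv (-(2 * p - 1) ^ 2 / (2 * p * (1 - p) ^ 2) * phiDeriv p) p := by
  have h1p : 0 < 1 - p := sub_pos.2 hp.2
  have hB : 0 < p * (1 - p) ^ 3 := mul_pos hp.1 (pow_pos h1p 3)
  have hexp : HasDerivAt (fun p => -p / (2 * (1 - p))) (-1 / (2 * (1 - p) ^ 2)) p :=
    ((hasDerivAt_id' p).fun_neg.div (((hasDerivAt_id' p).const_sub 1).const_mul 2)
      (by positivity)).congr_deriv (by field_simp; ring)
  have hpoly : HasDerivAt (fun p => p * (1 - p) ^ 3) ((1 - p) ^ 2 * (1 - 4 * p)) p :=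
    ((hasDerivAt_id' p).mul (((hasDerivAt_id' p).const_sub 1).fun_pow 3)).congr_deriv (by ring)
  refine (hexp.exp.fun_div ((hpoly.sqrt hB.ne').const_mul (2 * √(2 * π)))
    (by positivity)).congr_deriv ?_
  have hs : √(p * (1 - p) ^ 3) ^ 2 = p * (1 - p) ^ 3 := sq_sqrt hB.le
  have : 0 < √(p * (1 - p) ^ 3) := sqrt_pos.2 hB
  have := hp.1
  rw [phiDeriv]
  field_simp
  linear_combination ((2 * p - 1) ^ 2 - p) * hs

theorem strictMonoOn_Ioo_of_hasDerivAt_pos {f f' : ℝ → ℝ} {a b : ℝ}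
    (hf : ∀ x ∈ Ioo a b, HasDerivAt f (f' x) x) (hf' : ∀ x ∈ Ioo a b, 0 < f' x) :
    StrictMonoOn f (Ioo a b) :=
  strictMonoOn_of_hasDerivWithinAt_pos (convex_Ioo a b)
    (fun x hx => (hf x hx).continuousAt.continuousWithinAt)
    (fun x hx => (hf x (interior_subset hx)).hasDerivWithinAt)
    (fun x hx => hf' x (interior_subset hx))

theorem strictAntiOn_Ioo_of_hasDerivAt_neg_of_ne {f f' : ℝ → ℝ} {a b c : ℝ} (hc : c ∈ Ioo a b)
    (hf : ∀ x ∈ Ioo a b, HasDerivAt f (f' x) x) (hf' : ∀ x ∈ Ioo a b, x ≠ c → f' x < 0) :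
    StrictAntiOn f (Ioo a b) := by
  have hpiece : ∀ D ⊆ Ioo a b, Convex ℝ D → c ∉ interior D → StrictAntiOn f D :=
    fun D hDab hD hcD => strictAntiOn_of_hasDerivWithinAt_neg hD
      (fun x hx => (hf x (hDab hx)).continuousAt.continuousWithinAt)
      (fun x hx => (hf x (hDab (interior_subset hx))).hasDerivWithinAt)
      (fun x hx => hf' x (hDab (interior_subset hx)) (ne_of_mem_of_not_mem hx hcD))
  have hleft : StrictAntiOn f (Ioc a c) :=
    hpiece _ (Ioc_subset_Ioo_right hc.2) (convex_Ioc a c) (by simp)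
  have hright : StrictAntiOn f (Ico c b) :=
    hpiece _ (Ico_subset_Ioo_left hc.1) (convex_Ico c b) (by simp)
  rw [← Ioc_union_Ico_eq_Ioo hc.1 hc.2]
  exact hleft.union hright (isGreatest_Ioc hc.1) ⟨left_mem_Ico.2 hc.2, fun _ hx => hx.1⟩

theorem phi_monotone_deriv_antitone :
    StrictMonoOn (fun p : ℝ => Phi (Real.sqrt (p / (1 - p)))) (Set.Ioo 0 1) ∧
    (∀ p ∈ Set.Ioo (0 : ℝ) 1,
      HasDerivAt (fun p : ℝ => Phi (Real.sqrt (p / (1 - p))))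
        (Real.exp (-p / (2 * (1 - p))) /
          (2 * Real.sqrt (2 * Real.pi) * Real.sqrt (p * (1 - p) ^ 3))) p) ∧
    StrictAntiOn
      (fun p : ℝ => Real.exp (-p / (2 * (1 - p))) /
        (2 * Real.sqrt (2 * Real.pi) * Real.sqrt (p * (1 - p) ^ 3)))
      (Set.Ioo 0 1) := by
  refine ⟨strictMonoOn_Ioo_of_hasDerivAt_pos (fun _ => hasDerivAt_phi) (fun _ => phiDeriv_pos),
    fun _ => hasDerivAt_phi, ?_⟩
  refine strictAntiOn_Ioo_of_hasDerivAt_neg_of_ne (c := 1 / 2) (by norm_num)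
    (fun _ => hasDerivAt_phiDeriv) fun p hp hne => mul_neg_of_neg_of_pos ?_ (phiDeriv_pos hp)
  have : 2 * p - 1 ≠ 0 := fun h => hne (by linarith)
  have := hp.1
  have := sub_pos.2 hp.2
  exact div_neg_of_neg_of_pos (neg_neg_of_pos (by positivity)) (by positivity)
end

section
/- Let p ∈ (0,1), q = 1−p, and let X be a random variable with P(X = √(q/p)) = p and P(X = −√(p/q)) = q. Then sup_{x ∈ ℝ} |P(X < x) − Φ(x)| = Φ(√(p/q)) − p if 0 < p < 1/2, and sup_{x ∈ ℝ} |P(X < x) − Φ(x)| = Φ(√(q/p)) − q if 1/2 ≤ p < 1. -/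
/-! The law of `X` has distribution function `F = 0` on `(-∞, -√(p/q)]`, `F = q` on
`(-√(p/q), √(q/p)]` and `F = 1` beyond, so, `Φ` being continuous and increasing, the supremum of
`|F - Φ|` is the largest of `Φ(-√(p/q))`, `q - Φ(-√(p/q))`, `1 - Φ(√(q/p))` and `Φ(√(q/p)) - q`.
Put `r = min p q` and `c = √(r/(1-r)) ≤ 1`, so that `r = c²/(1+c²)` and the two atoms are `±c`
and `∓c⁻¹`. Then `1 + r ≤ 2Φ(c)` and `Φ(c⁻¹) - Φ(c) ≤ 1 - 2r` single out `Φ(c) - r` as the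
largest term; both estimates follow from `1 - t²/2 ≤ exp(-t²/2) ≤ (1 + t²/2)⁻¹` and
`2 ≤ √(2π) ≤ 3`. -/

open MeasureTheory Real Set

open ProbabilityTheory intervalIntegral

local notation "φ" => gaussianPDFReal 0 1

lemma gaussianPDFReal_zero_one (t : ℝ) : φ t = exp (-t ^ 2 / 2) / √(2 * π) := by
  simp [gaussianPDFReal, div_eq_inv_mul]

lemma Phi_eq_integral (x : ℝ) : Phi x = ∫ t in Iic x, φ t := by
  simp only [gaussianPDFReal_zero_one, Phi]

lemma Phi_sub_Phi (a b : ℝ) : Phi b - Phi a = ∫ t in a..b, φ t := by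
  simp only [Phi_eq_integral]
  exact integral_Iic_sub_Iic (integrable_gaussianPDFReal 0 1).integrableOn
    (integrable_gaussianPDFReal 0 1).integrableOn

lemma Phi_neg (x : ℝ) : Phi (-x) = 1 - Phi x := by
  have h_even : ∫ t in Ioi x, φ (-t) = ∫ t in Ioi x, φ t := by
    simp only [gaussianPDFReal_zero_one, neg_sq]
  rw [eq_sub_iff_add_eq, Phi_eq_integral, Phi_eq_integral, ← integral_comp_neg_Ioi, h_even,
    add_comm, integral_Iic_add_Ioi (integrable_gaussianPDFReal 0 1).integrableOn
      (integrable_gaussianPDFReal 0 1).integrableOn, integral_gaussianPDFReal_eq_one 0 one_ne_zero]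

lemma Phi_zero : Phi 0 = 1 / 2 := by
  linarith [neg_zero (G := ℝ) ▸ Phi_neg 0]

lemma Phi_eq_half_add (x : ℝ) : Phi x = 1 / 2 + ∫ t in (0 : ℝ)..x, φ t := by
  linarith [Phi_sub_Phi 0 x, Phi_zero]

lemma Phi_nonneg (x : ℝ) : 0 ≤ Phi x := by
  rw [Phi_eq_integral]
  exact setIntegral_nonneg measurableSet_Iic fun t _ ↦ gaussianPDFReal_nonneg 0 1 t

lemma Phi_le_one (x : ℝ) : Phi x ≤ 1 := by
  linarith [Phi_nonneg (-x), Phi_neg x]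

lemma monotone_Phi : Monotone Phi := fun a b hab ↦ by
  linarith [Phi_sub_Phi a b,
    integral_nonneg (μ := volume) hab fun t _ ↦ gaussianPDFReal_nonneg 0 1 t]

lemma continuous_Phi : Continuous Phi := by
  have h : Phi = fun x ↦ Phi 0 + ∫ t in (0 : ℝ)..x, φ t := by
    funext x; rw [← Phi_sub_Phi]; ring
  rw [h]
  exact continuous_const.add <|
    continuous_primitive (fun _ _ ↦ (integrable_gaussianPDFReal 0 1).intervalIntegrable) 0

lemma le_integral_gaussianPDFReal_zero_one {c : ℝ} (hc : 0 ≤ c) :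
    (c - c ^ 3 / 6) / √(2 * π) ≤ ∫ t in (0 : ℝ)..c, φ t := by
  have h_poly : ∫ t in (0 : ℝ)..c, (1 - t ^ 2 / 2) / √(2 * π) = (c - c ^ 3 / 6) / √(2 * π) := by
    rw [intervalIntegral.integral_div, integral_sub intervalIntegrable_const
      ((intervalIntegrable_pow 2).div_const 2), intervalIntegral.integral_const,
      intervalIntegral.integral_div, integral_pow, smul_eq_mul]
    ring
  rw [← h_poly]
  refine integral_mono_on hc ((by fun_prop : Continuous _).intervalIntegrable _ _)
    (integrable_gaussianPDFReal 0 1).intervalIntegrable fun t _ ↦ ?_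
  rw [gaussianPDFReal_zero_one]
  gcongr
  linarith [add_one_le_exp (-t ^ 2 / 2)]

lemma exp_neg_sq_div_two_le (t : ℝ) : exp (-t ^ 2 / 2) ≤ (1 + t ^ 2 / 2)⁻¹ := by
  rw [neg_div, exp_neg]
  exact inv_anti₀ (by positivity) (by linarith [add_one_le_exp (t ^ 2 / 2)])

lemma integral_gaussianPDFReal_zero_one_le {r s : ℝ} (hr : 0 ≤ r) (hrs : r ≤ s) :
    ∫ t in r..s, φ t ≤ (s - r) / ((1 + r ^ 2 / 2) * √(2 * π)) := by
  have h_const : ∫ t in r..s, ((1 + r ^ 2 / 2) * √(2 * π))⁻¹ =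
      (s - r) / ((1 + r ^ 2 / 2) * √(2 * π)) := by
    rw [intervalIntegral.integral_const, smul_eq_mul, ← div_eq_mul_inv]
  rw [← h_const]
  refine integral_mono_on hrs (integrable_gaussianPDFReal 0 1).intervalIntegrable
    intervalIntegrable_const fun t ht ↦ ?_
  rw [gaussianPDFReal_zero_one, mul_inv, div_eq_mul_inv]
  gcongr
  calc exp (-t ^ 2 / 2) ≤ (1 + t ^ 2 / 2)⁻¹ := exp_neg_sq_div_two_le t
    _ ≤ (1 + r ^ 2 / 2)⁻¹ := by gcongr; nlinarith [ht.1]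

lemma two_le_sqrt_two_pi : 2 ≤ √(2 * π) :=
  le_sqrt_of_sq_le (by nlinarith [pi_gt_three])

lemma sqrt_two_pi_le_three : √(2 * π) ≤ 3 :=
  sqrt_le_iff.2 ⟨by norm_num, by nlinarith [pi_lt_four]⟩

lemma one_add_le_two_mul_Phi {c : ℝ} (hc0 : 0 ≤ c) (hc1 : c ≤ 1) :
    1 + c ^ 2 / (1 + c ^ 2) ≤ 2 * Phi c := by
  have h_num : 0 ≤ c - c ^ 3 / 6 := by
    nlinarith [mul_nonneg hc0 (sub_nonneg.2 hc1),
      mul_nonneg hc0 (mul_nonneg hc0 (sub_nonneg.2 hc1))]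
  have h_poly : c ^ 2 / (1 + c ^ 2) ≤ (c - c ^ 3 / 6) / 3 * 2 := by
    rw [div_le_iff₀ (by positivity)]
    nlinarith [mul_nonneg hc0 (sq_nonneg (2 * c - 3 / 2)), mul_nonneg hc0 (sub_nonneg.2 hc1),
      mul_nonneg (mul_nonneg hc0 hc0) (mul_nonneg hc0 (sub_nonneg.2 hc1))]
  have h_sqrt : (c - c ^ 3 / 6) / 3 ≤ (c - c ^ 3 / 6) / √(2 * π) :=
    div_le_div_of_nonneg_left h_num (by linarith [two_le_sqrt_two_pi]) sqrt_two_pi_le_three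
  linarith [Phi_eq_half_add c, le_integral_gaussianPDFReal_zero_one hc0]

lemma Phi_inv_sub_Phi_le {c : ℝ} (hc0 : 0 < c) (hc1 : c ≤ 1) :
    Phi c⁻¹ - Phi c ≤ (1 - c ^ 2) / (1 + c ^ 2) := by
  have hs2 := two_le_sqrt_two_pi
  rcases le_or_gt (c ^ 2) (1 / 2) with hc | hc
  · have h_num : 0 ≤ c - c ^ 3 / 6 := by nlinarith
    have h_sqrt : (c - c ^ 3 / 6) / 3 ≤ (c - c ^ 3 / 6) / √(2 * π) :=
      div_le_div_of_nonneg_left h_num (by linarith) sqrt_two_pi_le_three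
    have h_poly : 1 / 2 - (c - c ^ 3 / 6) / 3 ≤ (1 - c ^ 2) / (1 + c ^ 2) := by
      rw [le_div_iff₀ (by positivity)]
      nlinarith [mul_nonneg hc0.le (sub_nonneg.2 hc), sq_nonneg (c - 1 / 2),
        mul_nonneg (mul_nonneg hc0.le hc0.le) (mul_nonneg hc0.le (sub_nonneg.2 hc))]
    linarith [Phi_le_one c⁻¹, Phi_eq_half_add c, le_integral_gaussianPDFReal_zero_one hc0.le]
  · have h_key : 1 + c ^ 2 ≤ c * (1 + c ^ 2 / 2) * √(2 * π) := by
      have : 1 + c ^ 2 ≤ c * (1 + c ^ 2 / 2) * 2 := by nlinarith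
      nlinarith [mul_le_mul_of_nonneg_left hs2 (by positivity : 0 ≤ c * (1 + c ^ 2 / 2))]
    calc Phi c⁻¹ - Phi c = ∫ t in c..c⁻¹, φ t := Phi_sub_Phi _ _
      _ ≤ (c⁻¹ - c) / ((1 + c ^ 2 / 2) * √(2 * π)) :=
        integral_gaussianPDFReal_zero_one_le hc0.le (hc1.trans ((one_le_inv₀ hc0).2 hc1))
      _ = (1 - c ^ 2) / (c * (1 + c ^ 2 / 2) * √(2 * π)) := by field_simp
      _ ≤ (1 - c ^ 2) / (1 + c ^ 2) :=
        div_le_div_of_nonneg_left (by nlinarith) (by positivity) h_key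

lemma max_eq_Phi_sub_of_le_half {r : ℝ} (hr0 : 0 < r) (hr : r ≤ 1 / 2) :
    max (max (1 - Phi √(r / (1 - r))) (Phi √(r / (1 - r)) - r))
      (max (1 - Phi √((1 - r) / r)) (Phi √((1 - r) / r) - (1 - r))) = Phi √(r / (1 - r)) - r := by
  have h1r : 0 < 1 - r := by linarith
  set c := √(r / (1 - r)) with hc
  have hc0 : 0 < c := sqrt_pos.2 (div_pos hr0 h1r)
  have hc1 : c ≤ 1 := sqrt_le_one.2 ((div_le_one h1r).2 (by linarith))
  have hr_eq : r = c ^ 2 / (1 + c ^ 2) := by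
    rw [hc, sq_sqrt (div_pos hr0 h1r).le]; field_simp; ring
  have hd : √((1 - r) / r) = c⁻¹ := by rw [hc, ← sqrt_inv, inv_div]
  have h_core := one_add_le_two_mul_Phi hc0.le hc1
  have h_cross := Phi_inv_sub_Phi_le hc0 hc1
  have h_two_r : (1 - c ^ 2) / (1 + c ^ 2) = 1 - 2 * r := by rw [hr_eq]; field_simp; ring
  have h_mono := monotone_Phi (hc1.trans ((one_le_inv₀ hc0).2 hc1))
  rw [← hr_eq] at h_core
  rw [hd]
  refine le_antisymm (max_le (max_le ?_ le_rfl) (max_le ?_ ?_))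
    (le_max_of_le_left (le_max_right _ _)) <;> linarith

lemma le_ciSup_of_mem_closure {α β : Type*} [TopologicalSpace α] [ConditionallyCompleteLattice β]
    [TopologicalSpace β] [ClosedIicTopology β] {f g : α → β} (hf : BddAbove (range f))
    (hg : Continuous g) {S : Set α} (hfg : EqOn f g S) {c : α} (hc : c ∈ closure S) :
    g c ≤ ⨆ x, f x :=
  closure_minimal (fun x hx ↦ (hfg hx).symm.trans_le (le_ciSup hf x)) (isClosed_Iic.preimage hg) hc

lemma iSup_abs_sub_eq_of_step {F G : ℝ → ℝ} {a b s : ℝ} (hab : a < b) (hG : Monotone G)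
    (hGc : Continuous G) (hG0 : ∀ x, 0 ≤ G x) (hG1 : ∀ x, G x ≤ 1) (hF0 : ∀ x ≤ a, F x = 0)
    (hFs : ∀ x ∈ Ioc a b, F x = s) (hF1 : ∀ x, b < x → F x = 1) :
    ⨆ x, |F x - G x| = max (max (G a) (s - G a)) (max (1 - G b) (G b - s)) := by
  have h_le : ∀ x, |F x - G x| ≤ max (max (G a) (s - G a)) (max (1 - G b) (G b - s)) := by
    intro x
    rcases le_or_gt x a with hxa | hxa
    · rw [hF0 x hxa, zero_sub, abs_neg, abs_of_nonneg (hG0 x)]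
      exact le_max_of_le_left (le_max_of_le_left (hG hxa))
    rcases le_or_gt x b with hxb | hxb
    · rw [hFs x ⟨hxa, hxb⟩, abs_sub_le_iff]
      exact ⟨le_max_of_le_left (le_max_of_le_right (by linarith [hG hxa.le])),
        le_max_of_le_right (le_max_of_le_right (by linarith [hG hxb]))⟩
    · rw [hF1 x hxb, abs_of_nonneg (sub_nonneg.2 (hG1 x))]
      exact le_max_of_le_right (le_max_of_le_left (by linarith [hG hxb.le]))
  have hbdd : BddAbove (range fun x ↦ |F x - G x|) := ⟨_, forall_mem_range.2 h_le⟩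
  refine le_antisymm (ciSup_le h_le) (max_le (max_le ?_ ?_) (max_le ?_ ?_))
  · calc G a = |F a - G a| := by rw [hF0 a le_rfl, zero_sub, abs_neg, abs_of_nonneg (hG0 a)]
      _ ≤ _ := le_ciSup hbdd a
  · refine (le_abs_self _).trans (le_ciSup_of_mem_closure hbdd (g := fun x ↦ |s - G x|)
      (S := Ioc a b) (by fun_prop) (fun x hx ↦ by simp only [hFs x hx]) ?_)
    rw [closure_Ioc hab.ne]
    exact left_mem_Icc.2 hab.le
  · refine (le_abs_self _).trans (le_ciSup_of_mem_closure hbdd (g := fun x ↦ |1 - G x|)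
      (S := Ioi b) (by fun_prop) (fun x hx ↦ by simp only [hF1 x hx]) ?_)
    rw [closure_Ioi]
    exact self_mem_Ici
  · calc G b - s ≤ |F b - G b| := by
          rw [hFs b ⟨hab, le_rfl⟩, abs_sub_comm]; exact le_abs_self _
      _ ≤ _ := le_ciSup hbdd b

section TwoPoint

variable {Ω : Type*} [MeasurableSpace Ω] {μ : Measure Ω} {X : Ω → ℝ} {a b x : ℝ}

lemma ae_eq_or_eq_of_measure_add_measure_eq_one [IsProbabilityMeasure μ] (hX : Measurable X)
    (hab : a ≠ b) (h : μ {ω | X ω = a} + μ {ω | X ω = b} = 1) : ∀ᵐ ω ∂μ, X ω = a ∨ X ω = b := by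
  have h_disj : Disjoint {ω | X ω = a} {ω | X ω = b} :=
    disjoint_left.2 fun ω ha hb ↦ hab (ha.symm.trans hb)
  have hb := hX (measurableSet_singleton b)
  rw [← measure_union h_disj hb] at h
  exact mem_ae_iff.2 ((prob_compl_eq_zero_iff ((hX (measurableSet_singleton a)).union hb)).2 h)

lemma measure_setOf_lt_eq_zero (h : ∀ᵐ ω ∂μ, X ω = a ∨ X ω = b) (hab : a ≤ b) (hx : x ≤ a) :
    μ {ω | X ω < x} = 0 := by
  refine measure_eq_zero_iff_ae_notMem.2 (h.mono fun ω hω ↦ ?_)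
  refine not_lt.2 (show x ≤ X ω from ?_)
  rcases hω with hω | hω <;> rw [hω] <;> linarith

lemma measure_setOf_lt_eq_measure_left (h : ∀ᵐ ω ∂μ, X ω = a ∨ X ω = b) (hax : a < x)
    (hxb : x ≤ b) : μ {ω | X ω < x} = μ {ω | X ω = a} := by
  refine measure_congr (h.mono fun ω hω ↦ propext (show X ω < x ↔ X ω = a from ?_))
  rcases hω with hω | hω <;> rw [hω]
  · exact iff_of_true hax rfl
  · exact iff_of_false (not_lt.2 hxb) (hax.trans_le hxb).ne'

lemma measure_setOf_lt_eq_one [IsProbabilityMeasure μ] (h : ∀ᵐ ω ∂μ, X ω = a ∨ X ω = b)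
    (hab : a ≤ b) (hbx : b < x) : μ {ω | X ω < x} = 1 := by
  rw [measure_congr (ae_eq_univ.2 (measure_eq_zero_iff_ae_notMem.2 (h.mono fun ω hω ↦ ?_))),
    measure_univ]
  refine not_not_intro (show X ω < x from ?_)
  rcases hω with hω | hω <;> rw [hω] <;> linarith

end TwoPoint

theorem uniform_distance_two_point_normal
    {Ω : Type*} [MeasurableSpace Ω] (μ : Measure Ω) [IsProbabilityMeasure μ]
    (p : ℝ) (hp : p ∈ Set.Ioo (0 : ℝ) 1) (q : ℝ) (hq : q = 1 - p)
    (X : Ω → ℝ) (hX : Measurable X)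
    (hXp : μ {ω | X ω = Real.sqrt (q / p)} = ENNReal.ofReal p)
    (hXq : μ {ω | X ω = -Real.sqrt (p / q)} = ENNReal.ofReal q) :
    (p < 1/2 →
      (⨆ x : ℝ, |(μ {ω | X ω < x}).toReal - Phi x|) = Phi (Real.sqrt (p / q)) - p) ∧
    (1/2 ≤ p →
      (⨆ x : ℝ, |(μ {ω | X ω < x}).toReal - Phi x|) = Phi (Real.sqrt (q / p)) - q) := by
  obtain ⟨hp0, hp1⟩ := hp
  subst hq
  have h1p : 0 < 1 - p := by linarith
  set A := √(p / (1 - p))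
  set B := √((1 - p) / p)
  have hAB : -A < B := (neg_neg_of_pos (sqrt_pos.2 (div_pos hp0 h1p))).trans
    (sqrt_pos.2 (div_pos h1p hp0))
  have h_ae : ∀ᵐ ω ∂μ, X ω = -A ∨ X ω = B :=
    ae_eq_or_eq_of_measure_add_measure_eq_one hX hAB.ne <| by
      rw [hXq, hXp, ← ENNReal.ofReal_add h1p.le hp0.le, sub_add_cancel, ENNReal.ofReal_one]
  have h_sup : ⨆ x, |(μ {ω | X ω < x}).toReal - Phi x| =
      max (max (1 - Phi A) (Phi A - p)) (max (1 - Phi B) (Phi B - (1 - p))) := by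
    rw [iSup_abs_sub_eq_of_step (s := 1 - p) hAB monotone_Phi continuous_Phi Phi_nonneg Phi_le_one
      (fun x hx ↦ by rw [measure_setOf_lt_eq_zero h_ae hAB.le hx, ENNReal.toReal_zero])
      (fun x hx ↦ by rw [measure_setOf_lt_eq_measure_left h_ae hx.1 hx.2, hXq,
        ENNReal.toReal_ofReal h1p.le])
      (fun x hx ↦ by rw [measure_setOf_lt_eq_one h_ae hAB.le hx, ENNReal.toReal_one]),
      Phi_neg, sub_sub_sub_cancel_left]
  refine ⟨fun hp2 ↦ ?_, fun hp2 ↦ ?_⟩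
  · rw [h_sup, max_eq_Phi_sub_of_le_half hp0 hp2.le]
  · have h := max_eq_Phi_sub_of_le_half h1p (by linarith)
    rw [sub_sub_cancel] at h
    rw [h_sup, max_comm, h]
end
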